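/- arXiv:2411.16601 — 2 statements merged into one kernel-verified Lean document; each statement's English description precedes it below -/
import Mathlib

section
/- Let Ψ be as above and R₁ ≠ R₂ with L = R₁z₁ + R₂z₂ and H_t as above, F_t = (L, H_t). For any (a,b) ∈ ℝ² with a ≠ 0, the fiber F_t⁻¹(a,b) is disjoint from its image under Ψ, i.e. F_t⁻¹(a,b) ∩ Ψ(F_t⁻¹(a,b)) = ∅. -/
namespace CoupledAngularMomenta

abbrev Pt : Type := (ℝ × ℝ × ℝ) × (ℝ × ℝ × ℝ)

def onSpheres (p : Pt) : Prop :=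
  p.1.1 ^ 2 + p.1.2.1 ^ 2 + p.1.2.2 ^ 2 = 1 ∧ p.2.1 ^ 2 + p.2.2.1 ^ 2 + p.2.2.2 ^ 2 = 1

def Psi (p : Pt) : Pt := ((-p.1.1, p.1.2.1, -p.1.2.2), (p.2.1, -p.2.2.1, -p.2.2.2))

def L (R₁ R₂ : ℝ) (p : Pt) : ℝ := R₁ * p.1.2.2 + R₂ * p.2.2.2

def Ht (t : ℝ) (p : Pt) : ℝ :=
  (1 - t) * p.1.2.2 + t * (p.1.1 * p.2.1 + p.1.2.1 * p.2.2.1 + p.1.2.2 * p.2.2.2)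

/-- For `a ≠ 0`, the fiber `F_t⁻¹(a,b)` is disjoint from its image under `Ψ`. -/
theorem fiber_disjoint_Psi_image (R₁ R₂ t a b : ℝ) (hR₁ : 0 < R₁) (hR₂ : 0 < R₂)
    (hne : R₁ ≠ R₂) (ht : t ∈ Set.Icc (0 : ℝ) 1) (ha : a ≠ 0) :
    {p : Pt | onSpheres p ∧ L R₁ R₂ p = a ∧ Ht t p = b} ∩
      Psi '' {p : Pt | onSpheres p ∧ L R₁ R₂ p = a ∧ Ht t p = b} = ∅ := by
  ext p
  simp only [Set.mem_inter_iff, Set.mem_image, Set.mem_setOf_eq, Set.mem_empty_iff_false,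
    iff_false, not_and]
  rintro ⟨_, hLp, _⟩ ⟨q, ⟨_, hLq, _⟩, hq⟩
  have hLpq : L R₁ R₂ p = -(L R₁ R₂ q) := by
    subst hq; simp [L, Psi]; ring
  rw [hLp, hLq] at hLpq
  exact ha (by linarith)

end CoupledAngularMomenta
end

section
/- With R₁ = R₂ = R (the Kepler problem), for any point p ∈ S² × S² with L(p) = 0 (so z₁ = −z₂), setting z := z₁ and b := H_t(p), we have H_t(Ψ(p)) = −b − 2t z². Consequently F_t(Ψ(F_t⁻¹(0,b))) ⊆ {0} × [−b − 2t, −b]. -/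
namespace Kepler

abbrev Pt : Type := (ℝ × ℝ × ℝ) × (ℝ × ℝ × ℝ)

def onSpheres (p : Pt) : Prop :=
  p.1.1 ^ 2 + p.1.2.1 ^ 2 + p.1.2.2 ^ 2 = 1 ∧ p.2.1 ^ 2 + p.2.2.1 ^ 2 + p.2.2.2 ^ 2 = 1

def Psi (p : Pt) : Pt := ((-p.1.1, p.1.2.1, -p.1.2.2), (p.2.1, -p.2.2.1, -p.2.2.2))

def L (R : ℝ) (p : Pt) : ℝ := R * (p.1.2.2 + p.2.2.2)

def Ht (t : ℝ) (p : Pt) : ℝ :=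
  (1 - t) * p.1.2.2 + t * (p.1.1 * p.2.1 + p.1.2.1 * p.2.2.1 + p.1.2.2 * p.2.2.2)

/-- In the Kepler problem (`R₁ = R₂ = R`): on `L⁻¹(0)`, where `z₁ = -z₂ =: z`,
one has `H_t(Ψ(p)) = -b - 2 t z²` with `b = H_t(p)`; consequently
`F_t(Ψ(F_t⁻¹(0,b))) ⊆ {0} × [-b - 2t, -b]`. -/
theorem Ht_Psi_on_zero_level (R t b : ℝ) (hR : 0 < R) (ht : t ∈ Set.Icc (0 : ℝ) 1)
    (p : Pt) (hp : onSpheres p) (hL : L R p = 0) (hb : Ht t p = b) :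
    Ht t (Psi p) = -b - 2 * t * p.1.2.2 ^ 2 ∧
      (L R (Psi p), Ht t (Psi p)) ∈ ({0} ×ˢ Set.Icc (-b - 2 * t) (-b) : Set (ℝ × ℝ)) := by
  obtain ⟨⟨x1, y1, z1⟩, ⟨x2, y2, z2⟩⟩ := p
  obtain ⟨h1, h2⟩ := hp
  simp only [L, Ht, Psi] at *
  have hz : z2 = -z1 := by
    have := mul_eq_zero.mp hL
    rcases this with h | h
    · linarith
    · linarith
  subst hz hb
  obtain ⟨ht0, ht1⟩ := ht
  constructor
  · ring
  · constructor
    · simp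
    · dsimp only
      constructor
      · nlinarith [sq_nonneg x1, sq_nonneg y1, mul_nonneg ht0 (sq_nonneg x1), mul_nonneg ht0 (sq_nonneg y1)]
      · nlinarith [mul_nonneg ht0 (sq_nonneg z1)]

end Kepler
end
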